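/- Let v, v₁, v₂ ∈ ℝ^d and let ω = (ω₁, ω₂) ∈ ℝ^{2d} satisfy |ω₁|² + |ω₂|² = 1. Define c = ((v₁−v)·ω₁ + (v₂−v)·ω₂)/(1 + ω₁·ω₂) and v* = v + c(ω₁+ω₂), v₁* = v₁ − c ω₁, v₂* = v₂ − c ω₂. Set u = (v₁−v, v₂−v), u* = (v₁*−v*, v₂*−v*) ∈ ℝ^{2d}. Then: (i) micro-reversibility holds, i.e. u*·ω = −(u·ω), where u·ω = (v₁−v)·ω₁ + (v₂−v)·ω₂; and (ii) |v*−v₁*|² + |v*−v₂*|² + |v₁*−v₂*|² = |v−v₁|² + |v−v₂|² + |v₁−v₂|². -/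
import Mathlib


open scoped RealInnerProductSpace

/-- Scalar coefficient `c = ((v₁−v)·ω₁ + (v₂−v)·ω₂)/(1 + ω₁·ω₂)` of the ternary collision law. -/
noncomputable def tCoef {d : ℕ} (v v₁ v₂ ω₁ ω₂ : EuclideanSpace ℝ (Fin d)) : ℝ :=
  (⟪v₁ - v, ω₁⟫ + ⟪v₂ - v, ω₂⟫) / (1 + ⟪ω₁, ω₂⟫)

/-- `v* = v + c(ω₁+ω₂)`. -/
noncomputable def vStar {d : ℕ} (v v₁ v₂ ω₁ ω₂ : EuclideanSpace ℝ (Fin d)) :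
    EuclideanSpace ℝ (Fin d) := v + tCoef v v₁ v₂ ω₁ ω₂ • (ω₁ + ω₂)

/-- `v₁* = v₁ − c ω₁`. -/
noncomputable def v1Star {d : ℕ} (v v₁ v₂ ω₁ ω₂ : EuclideanSpace ℝ (Fin d)) :
    EuclideanSpace ℝ (Fin d) := v₁ - tCoef v v₁ v₂ ω₁ ω₂ • ω₁

/-- `v₂* = v₂ − c ω₂`. -/
noncomputable def v2Star {d : ℕ} (v v₁ v₂ ω₁ ω₂ : EuclideanSpace ℝ (Fin d)) :
    EuclideanSpace ℝ (Fin d) := v₂ - tCoef v v₁ v₂ ω₁ ω₂ • ω₂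

/-- micro-reversibility `u*·ω = −(u·ω)` (with
`u*·ω = (v₁*−v*)·ω₁ + (v₂*−v*)·ω₂` and `u·ω = (v₁−v)·ω₁ + (v₂−v)·ω₂`), and conservation of
`|v−v₁|² + |v−v₂|² + |v₁−v₂|²` under the ternary collision law. -/
theorem ternary_micro_reversibility {d : ℕ}
    (v v₁ v₂ ω₁ ω₂ : EuclideanSpace ℝ (Fin d)) (hω : ‖ω₁‖ ^ 2 + ‖ω₂‖ ^ 2 = 1) :
    (⟪v1Star v v₁ v₂ ω₁ ω₂ - vStar v v₁ v₂ ω₁ ω₂, ω₁⟫ +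
        ⟪v2Star v v₁ v₂ ω₁ ω₂ - vStar v v₁ v₂ ω₁ ω₂, ω₂⟫ =
      -(⟪v₁ - v, ω₁⟫ + ⟪v₂ - v, ω₂⟫)) ∧
    (‖vStar v v₁ v₂ ω₁ ω₂ - v1Star v v₁ v₂ ω₁ ω₂‖ ^ 2 +
        ‖vStar v v₁ v₂ ω₁ ω₂ - v2Star v v₁ v₂ ω₁ ω₂‖ ^ 2 +
        ‖v1Star v v₁ v₂ ω₁ ω₂ - v2Star v v₁ v₂ ω₁ ω₂‖ ^ 2 =
      ‖v - v₁‖ ^ 2 + ‖v - v₂‖ ^ 2 + ‖v₁ - v₂‖ ^ 2) := by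
  have hD : (1:ℝ) + ⟪ω₁, ω₂⟫ ≠ 0 := by
    have h1 := abs_le.mp (abs_real_inner_le_norm ω₁ ω₂)
    nlinarith [sq_nonneg (‖ω₁‖ - ‖ω₂‖), norm_nonneg ω₁, norm_nonneg ω₂]
  set c := tCoef v v₁ v₂ ω₁ ω₂ with hcdef
  have hc : c * (1 + ⟪ω₁, ω₂⟫) = ⟪v₁ - v, ω₁⟫ + ⟪v₂ - v, ω₂⟫ := div_mul_cancel₀ _ hD
  have hω' : ⟪ω₁, ω₁⟫ + ⟪ω₂, ω₂⟫ = (1:ℝ) := by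
    rw [real_inner_self_eq_norm_sq, real_inner_self_eq_norm_sq]; exact hω
  simp only [inner_sub_left] at hc
  constructor
  · simp only [vStar, v1Star, v2Star, ← hcdef, sub_sub, inner_sub_left, inner_add_left,
      inner_add_right, real_inner_smul_left]
    simp only [real_inner_comm ω₁ ω₂]
    linear_combination -2*hc - 2*c*hω'
  · simp only [vStar, v1Star, v2Star, ← hcdef, ← real_inner_self_eq_norm_sq]
    simp only [inner_sub_left, inner_sub_right, inner_add_left, inner_add_right,
      real_inner_smul_left, real_inner_smul_right]
    simp only [real_inner_comm v v₁, real_inner_comm v v₂, real_inner_comm v₁ v₂,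
      real_inner_comm v ω₁, real_inner_comm v₁ ω₁, real_inner_comm v₂ ω₁,
      real_inner_comm v ω₂, real_inner_comm v₁ ω₂, real_inner_comm v₂ ω₂,
      real_inner_comm ω₁ ω₂]
    linear_combination 6*c*hc + 6*c^2*hω'
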